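/- arXiv:1408.6282 — 7 statements merged into one kernel-verified Lean document; each statement's English description precedes it below -/
import Mathlib

section
/- For a fixed directed graph G, the influence function S ↦ INF(G,S) is submodular: for all S ⊆ T ⊆ V and v ∈ V, INF(G, S ∪ {v}) − INF(G,S) ≥ INF(G, T ∪ {v}) − INF(G,T). -/
/-- Influence of a seed set `S` in a directed graph with edge relation `E`. -/
noncomputable def influence {V : Type*} (E : V → V → Prop) (S : Set V) : ℕ :=
  {u : V | ∃ s ∈ S, Relation.ReflTransGen E s u}.ncard

lemma reach_union {V : Type*} (E : V → V → Prop) (S : Set V) (v : V) :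
    {u : V | ∃ s ∈ S ∪ {v}, Relation.ReflTransGen E s u} =
      {u : V | ∃ s ∈ S, Relation.ReflTransGen E s u} ∪
        {u : V | Relation.ReflTransGen E v u} := by
  ext u
  simp only [Set.mem_union, Set.mem_setOf_eq, Set.mem_singleton_iff]
  constructor
  · rintro ⟨s, (hs | rfl), h⟩
    · exact Or.inl ⟨s, hs, h⟩
    · exact Or.inr h
  · rintro (⟨s, hs, h⟩ | h)
    · exact ⟨s, Or.inl hs, h⟩
    · exact ⟨v, Or.inr rfl, h⟩

lemma influence_union_singleton {V : Type*} [Fintype V] (E : V → V → Prop)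
    (S : Set V) (v : V) :
    influence E (S ∪ {v}) = influence E S +
      ({u : V | Relation.ReflTransGen E v u} \
        {u : V | ∃ s ∈ S, Relation.ReflTransGen E s u}).ncard := by
  unfold influence
  rw [reach_union, Set.union_diff_self.symm, Set.ncard_union_eq
    (Set.disjoint_sdiff_right) (Set.toFinite _) (Set.toFinite _)]

/-- the influence function is submodular. -/
theorem influence_submodular {V : Type*} [Fintype V] (E : V → V → Prop)
    (S T : Set V) (hST : S ⊆ T) (v : V) :
    (influence E (S ∪ {v}) : ℝ) - influence E S ≥
      (influence E (T ∪ {v}) : ℝ) - influence E T := by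
  rw [influence_union_singleton, influence_union_singleton]
  push_cast
  have hsub : {u : V | ∃ s ∈ S, Relation.ReflTransGen E s u} ⊆
      {u : V | ∃ s ∈ T, Relation.ReflTransGen E s u} := by
    rintro u ⟨s, hs, h⟩; exact ⟨s, hST hs, h⟩
  have := Set.ncard_le_ncard (Set.diff_subset_diff_right hsub) (Set.toFinite ({u : V | Relation.ReflTransGen E v u} \ {u : V | ∃ s ∈ S, Relation.ReflTransGen E s u}))
  have : (({u : V | Relation.ReflTransGen E v u} \
      {u : V | ∃ s ∈ T, Relation.ReflTransGen E s u}).ncard : ℝ) ≤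
      (({u : V | Relation.ReflTransGen E v u} \
      {u : V | ∃ s ∈ S, Relation.ReflTransGen E s u}).ncard : ℝ) := by
    exact_mod_cast this
  linarith
end

section
/- For any monotone submodular set function f with f(∅)=0 on a finite ground set V, for every set U ⊆ V and every s ≥ 1, there exists a single element v ∈ V such that f(U ∪ {v}) − f(U) ≥ (1/s)·(max_{|Z|≤s} f(Z) − f(U)). -/
/-- for a monotone submodular `f` with `f ∅ = 0`, for every `U` and `s ≥ 1`
there is a single element `v` whose marginal gain over `U` is at least `1/s` times
`OPT_s - f U`, where `OPT_s = max_{|Z| ≤ s} f Z`.  (Equivalently, the marginal gain of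
`v` is at least `(f Z - f U)/s` simultaneously for all `Z` with `|Z| ≤ s`.) -/
theorem exists_good_element {V : Type*} [Fintype V] [Nonempty V] (f : Set V → ℝ)
    (hmono : ∀ S T : Set V, S ⊆ T → f S ≤ f T)
    (hsub : ∀ S T : Set V, S ⊆ T → ∀ v : V,
      f (S ∪ {v}) - f S ≥ f (T ∪ {v}) - f T)
    (hempty : f ∅ = 0)
    (U : Set V) (s : ℕ) (hs : 1 ≤ s) :
    ∃ v : V, ∀ Z : Set V, Z.ncard ≤ s →
      f (U ∪ {v}) - f U ≥ (1 / (s : ℝ)) * (f Z - f U) := by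
  classical
  -- key lemma: f(U ∪ A) - f U ≤ ∑_{a ∈ A} (f(U ∪ {a}) - f U)
  have key : ∀ A : Finset V, f (U ∪ ↑A) - f U ≤ ∑ a ∈ A, (f (U ∪ {a}) - f U) := by
    intro A
    induction A using Finset.induction_on with
    | empty => simp
    | @insert a A hx ih =>
      have hcoe : (↑(insert a A) : Set V) = (↑A : Set V) ∪ {a} := by
        rw [Finset.coe_insert, Set.insert_eq, Set.union_comm]
      rw [Finset.sum_insert hx, hcoe, ← Set.union_assoc]
      have hsub' := hsub U (U ∪ ↑A) Set.subset_union_left a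
      linarith
  obtain ⟨v, _, hv⟩ := Finset.exists_max_image Finset.univ
    (fun v => f (U ∪ {v}) - f U) Finset.univ_nonempty
  refine ⟨v, fun Z hZ => ?_⟩
  have hvnn : 0 ≤ f (U ∪ {v}) - f U := by
    have := hmono U (U ∪ {v}) Set.subset_union_left; linarith
  have hZfin : Z.Finite := Set.toFinite Z
  have hsum : f (U ∪ Z) - f U ≤ ∑ a ∈ hZfin.toFinset, (f (U ∪ {a}) - f U) := by
    have := key hZfin.toFinset
    rwa [Set.Finite.coe_toFinset] at this
  have hbound : ∑ a ∈ hZfin.toFinset, (f (U ∪ {a}) - f U)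
      ≤ (hZfin.toFinset.card : ℝ) * (f (U ∪ {v}) - f U) := by
    have := Finset.sum_le_card_nsmul hZfin.toFinset (fun a => f (U ∪ {a}) - f U)
      (f (U ∪ {v}) - f U) (fun a _ => hv a (Finset.mem_univ a))
    simpa [nsmul_eq_mul] using this
  have hcard : (hZfin.toFinset.card : ℝ) ≤ (s : ℝ) := by
    have : hZfin.toFinset.card ≤ s := by
      rwa [Set.ncard_eq_toFinset_card Z hZfin] at hZ
    exact_mod_cast this
  have hmonoZ : f Z ≤ f (U ∪ Z) := hmono Z (U ∪ Z) Set.subset_union_right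
  have hspos : (0 : ℝ) < s := by exact_mod_cast hs
  rw [ge_iff_le, div_mul_eq_mul_div, one_mul, div_le_iff₀ hspos]
  have : f Z - f U ≤ (s : ℝ) * (f (U ∪ {v}) - f U) := by
    calc f Z - f U ≤ f (U ∪ Z) - f U := by linarith
    _ ≤ (hZfin.toFinset.card : ℝ) * (f (U ∪ {v}) - f U) := le_trans hsum hbound
    _ ≤ (s : ℝ) * (f (U ∪ {v}) - f U) := by nlinarith
  linarith
end

section
/- Approximate greedy with multiplicative slack δ ∈ [0,1) achieves, after s steps, value at least (1 − (1 − (1−δ)/s)^s) times the optimum over sets of size s: if S_0 = ∅ and at each step S_{j+1} = S_j ∪ {v_j} where f(S_{j+1}) − f(S_j) ≥ (1−δ)·max_{v} (f(S_j ∪ {v}) − f(S_j)), then f(S_s) ≥ (1 − (1 − (1−δ)/s)^s)·OPT_s. -/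
/-- Submodularity: the marginal gain of a finite set is at most the sum of
individual marginal gains. -/
lemma submod_sum_bound {V : Type*} (f : Set V → ℝ)
    (hsub : ∀ S T : Set V, S ⊆ T → ∀ v : V,
      f (S ∪ {v}) - f S ≥ f (T ∪ {v}) - f T)
    (A : Set V) (Z : Finset V) :
    f (A ∪ ↑Z) - f A ≤ ∑ v ∈ Z, (f (A ∪ {v}) - f A) := by
  classical
  induction Z using Finset.induction with
  | empty => simp
  | @insert a Zf hx ih =>
      rw [Finset.sum_insert hx]
      have hset : (A ∪ ↑(insert a Zf) : Set V) = (A ∪ ↑Zf) ∪ {a} := by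
        ext x; simp [Finset.coe_insert]
      have h1 := hsub A (A ∪ ↑Zf) Set.subset_union_left a
      rw [hset]
      linarith

open Finset in
/-- approximate greedy with multiplicative slack `δ` achieves, after `s`
steps, value at least `(1 - (1 - (1-δ)/s)^s)` times `OPT_s = max_{|Z| ≤ s} f Z`. -/
theorem approximate_greedy_guarantee {V : Type*} [Fintype V] [Nonempty V]
    (f : Set V → ℝ)
    (hmono : ∀ S T : Set V, S ⊆ T → f S ≤ f T)
    (hsub : ∀ S T : Set V, S ⊆ T → ∀ v : V,
      f (S ∪ {v}) - f S ≥ f (T ∪ {v}) - f T)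
    (hempty : f ∅ = 0)
    (s : ℕ) (hs : 1 ≤ s) (δ : ℝ) (hδ0 : 0 ≤ δ) (hδ1 : δ < 1)
    (S : ℕ → Set V) (hS0 : S 0 = ∅)
    (hstep : ∀ j < s, ∃ v : V, S (j + 1) = S j ∪ {v} ∧
      f (S (j + 1)) - f (S j) ≥
        (1 - δ) * sSup {x : ℝ | ∃ w : V, x = f (S j ∪ {w}) - f (S j)}) :
    f (S s) ≥ (1 - (1 - (1 - δ) / (s : ℝ)) ^ s) *
      sSup {x : ℝ | ∃ Z : Set V, Z.ncard ≤ s ∧ x = f Z} := by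
  have hspos : (0 : ℝ) < s := by exact_mod_cast hs
  set OPT := sSup {x : ℝ | ∃ Z : Set V, Z.ncard ≤ s ∧ x = f Z} with hOPTdef
  set c : ℝ := 1 - (1 - δ) / (s : ℝ) with hc
  have hc0 : 0 ≤ c := by
    rw [hc]
    have h1 : (1 - δ) / (s : ℝ) ≤ 1 := by
      rw [div_le_one hspos]
      have : (1:ℝ) ≤ (s:ℝ) := by exact_mod_cast hs
      linarith
    linarith
  -- key: for any A, the max marginal gain M satisfies OPT - f A ≤ s * M
  have hkey : ∀ A : Set V,
      OPT - f A ≤ (s : ℝ) * sSup {x : ℝ | ∃ w : V, x = f (A ∪ {w}) - f A} := by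
    intro A
    set M := sSup {x : ℝ | ∃ w : V, x = f (A ∪ {w}) - f A} with hM
    have hMbdd : BddAbove {x : ℝ | ∃ w : V, x = f (A ∪ {w}) - f A} := by
      refine ⟨f Set.univ - f A, ?_⟩
      rintro x ⟨w, rfl⟩
      have := hmono (A ∪ {w}) Set.univ (Set.subset_univ _)
      linarith
    have hMge : ∀ w : V, f (A ∪ {w}) - f A ≤ M := fun w =>
      le_csSup hMbdd ⟨w, rfl⟩
    have hM0 : 0 ≤ M := by
      obtain ⟨w⟩ := ‹Nonempty V›
      have := hmono A (A ∪ {w}) Set.subset_union_left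
      have := hMge w
      linarith
    have hub : ∀ x ∈ {x : ℝ | ∃ Z : Set V, Z.ncard ≤ s ∧ x = f Z},
        x ≤ f A + (s : ℝ) * M := by
      rintro x ⟨Z, hZs, rfl⟩
      have hZfin : Z.Finite := Set.toFinite Z
      have hcard : hZfin.toFinset.card = Z.ncard :=
        (Set.ncard_eq_toFinset_card Z hZfin).symm
      have h1 : f Z ≤ f (A ∪ Z) := hmono Z (A ∪ Z) Set.subset_union_right
      have h2 : f (A ∪ Z) - f A ≤ ∑ v ∈ hZfin.toFinset, (f (A ∪ {v}) - f A) := by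
        have := submod_sum_bound f hsub A hZfin.toFinset
        rwa [hZfin.coe_toFinset] at this
      have h3 : ∑ v ∈ hZfin.toFinset, (f (A ∪ {v}) - f A)
          ≤ hZfin.toFinset.card • M :=
        Finset.sum_le_card_nsmul _ _ M (fun v _ => hMge v)
      have h4 : (hZfin.toFinset.card : ℝ) * M ≤ (s : ℝ) * M := by
        apply mul_le_mul_of_nonneg_right _ hM0
        rw [hcard]
        exact_mod_cast hZs
      rw [nsmul_eq_mul] at h3
      linarith
    have hOPTle : OPT ≤ f A + (s : ℝ) * M := by
      refine csSup_le ⟨f ∅, ⟨∅, by simp, rfl⟩⟩ hub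
    linarith
  -- induction: OPT - f (S j) ≤ c^j * OPT
  have hind : ∀ j, j ≤ s → OPT - f (S j) ≤ c ^ j * OPT := by
    intro j
    induction j with
    | zero => intro _; rw [hS0, hempty]; simp
    | succ j ih =>
        intro hjs
        have hjs' : j < s := hjs
        have hj : j ≤ s := le_of_lt hjs'
        obtain ⟨v, hSv, hgain⟩ := hstep j hjs'
        have hkeyj := hkey (S j)
        have hgain2 : f (S (j+1)) - f (S j) ≥ (1 - δ) / (s:ℝ) * (OPT - f (S j)) := by
          have h1 : (1 - δ) * ((OPT - f (S j)) / (s:ℝ)) ≤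
              (1 - δ) * sSup {x : ℝ | ∃ w : V, x = f (S j ∪ {w}) - f (S j)} := by
            apply mul_le_mul_of_nonneg_left _ (by linarith)
            rw [div_le_iff₀ hspos]
            linarith [hkeyj]
          calc (1 - δ) / (s:ℝ) * (OPT - f (S j))
              = (1 - δ) * ((OPT - f (S j)) / (s:ℝ)) := by ring
            _ ≤ _ := h1
            _ ≤ f (S (j+1)) - f (S j) := hgain
        have ihj := ih hj
        have hstep2 : OPT - f (S (j+1)) ≤ c * (OPT - f (S j)) := by
          rw [hc]; nlinarith [hgain2]
        calc OPT - f (S (j+1)) ≤ c * (OPT - f (S j)) := hstep2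
          _ ≤ c * (c ^ j * OPT) := mul_le_mul_of_nonneg_left ihj hc0
          _ = c ^ (j+1) * OPT := by ring
  have := hind s le_rfl
  have : OPT - f (S s) ≤ c ^ s * OPT := this
  nlinarith [this]
end

section
/- The greedy algorithm for maximizing a monotone submodular function f with f(∅)=0 produces a sequence σ_1, σ_2, … such that for every s simultaneously, f({σ_1,…,σ_s}) ≥ (1 − (1 − 1/s)^s)·OPT_s, where OPT_s is the maximum of f over sets of size at most s. -/
lemma greedy_aux_sum {V : Type*} (f : Set V → ℝ)
    (hsub : ∀ S T : Set V, S ⊆ T → ∀ v : V,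
      f (S ∪ {v}) - f S ≥ f (T ∪ {v}) - f T)
    (S : Set V) (T : Finset V) :
    f (S ∪ ↑T) - f S ≤ ∑ z ∈ T, (f (S ∪ {z}) - f S) := by
  classical
  induction T using Finset.induction with
  | empty => simp
  | @insert a T' ha ih =>
    have hset : S ∪ ↑(insert a T') = (S ∪ ↑T') ∪ {a} := by
      ext x; simp [Finset.coe_insert]
    have h1 := hsub S (S ∪ ↑T') Set.subset_union_left a
    rw [hset, Finset.sum_insert ha]
    linarith

/-- exact greedy, which at each step adds an element maximizing the value
of the augmented set, satisfies simultaneously for every prefix length `s ≥ 1`: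
`f(S_s) ≥ (1 - (1 - 1/s)^s) · OPT_s`, where `OPT_s = max_{|Z| ≤ s} f Z`. -/
theorem greedy_prefix_guarantee {V : Type*} [Fintype V] [Nonempty V]
    (f : Set V → ℝ)
    (hmono : ∀ S T : Set V, S ⊆ T → f S ≤ f T)
    (hsub : ∀ S T : Set V, S ⊆ T → ∀ v : V,
      f (S ∪ {v}) - f S ≥ f (T ∪ {v}) - f T)
    (hempty : f ∅ = 0)
    (σ : ℕ → V) (S : ℕ → Set V) (hS0 : S 0 = ∅)
    (hstep : ∀ j : ℕ, S (j + 1) = S j ∪ {σ (j + 1)} ∧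
      ∀ w : V, f (S j ∪ {w}) ≤ f (S (j + 1))) :
    ∀ s : ℕ, 1 ≤ s →
      f (S s) ≥ (1 - (1 - 1 / (s : ℝ)) ^ s) *
        sSup {x : ℝ | ∃ Z : Set V, Z.ncard ≤ s ∧ x = f Z} := by
  classical
  intro s hs
  set A := {x : ℝ | ∃ Z : Set V, Z.ncard ≤ s ∧ x = f Z} with hA
  have hAne : A.Nonempty := ⟨f ∅, ∅, by simp, rfl⟩
  have hAfin : A.Finite := by
    have : A ⊆ f '' Set.univ := by
      rintro x ⟨Z, _, rfl⟩; exact ⟨Z, trivial, rfl⟩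
    exact (Set.finite_univ.image f).subset this
  set M := sSup A with hM
  obtain ⟨Z, hZcard, hZM⟩ : M ∈ A := hAne.csSup_mem hAfin
  have hM0 : (0 : ℝ) ≤ M := by
    have : f ∅ ≤ M := le_csSup hAfin.bddAbove ⟨∅, by simp, rfl⟩
    rwa [hempty] at this
  have hsR : (1 : ℝ) ≤ (s : ℝ) := by exact_mod_cast hs
  have hspos : (0 : ℝ) < (s : ℝ) := lt_of_lt_of_le one_pos hsR
  -- finite Z as finset
  have hZfin : Z.Finite := Z.toFinite
  set ZF := hZfin.toFinset with hZF
  have hZFcoe : (↑ZF : Set V) = Z := hZfin.coe_toFinset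
  have hZFcard : (ZF.card : ℝ) ≤ (s : ℝ) := by
    have : ZF.card = Z.ncard := by
      rw [← hZFcoe, Set.ncard_coe_finset]
    exact_mod_cast this ▸ hZcard
  -- key step inequality
  have key : ∀ j : ℕ, M - f (S j) ≤ (s : ℝ) * (f (S (j + 1)) - f (S j)) := by
    intro j
    have gain0 : 0 ≤ f (S (j + 1)) - f (S j) := by
      have := hmono (S j) (S (j + 1)) (by rw [(hstep j).1]; exact Set.subset_union_left)
      linarith
    have h1 : M ≤ f (S j ∪ ↑ZF) := by
      rw [hZM, hZFcoe]
      exact hmono Z (S j ∪ Z) Set.subset_union_right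
    have h2 := greedy_aux_sum f hsub (S j) ZF
    have h3 : ∑ z ∈ ZF, (f (S j ∪ {z}) - f (S j)) ≤ ZF.card * (f (S (j + 1)) - f (S j)) := by
      calc ∑ z ∈ ZF, (f (S j ∪ {z}) - f (S j))
          ≤ ∑ _z ∈ ZF, (f (S (j + 1)) - f (S j)) := by
            apply Finset.sum_le_sum
            intro z _
            have := (hstep j).2 z
            linarith
        _ = ZF.card * (f (S (j + 1)) - f (S j)) := by
            rw [Finset.sum_const, nsmul_eq_mul]
    have h4 : (ZF.card : ℝ) * (f (S (j + 1)) - f (S j)) ≤ (s : ℝ) * (f (S (j + 1)) - f (S j)) :=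
      mul_le_mul_of_nonneg_right hZFcard gain0
    linarith
  -- induction: M - f (S j) ≤ (1 - 1/s)^j * M
  have ind : ∀ j : ℕ, M - f (S j) ≤ (1 - 1 / (s : ℝ)) ^ j * M := by
    intro j
    induction j with
    | zero => simp [hS0, hempty]
    | succ j ih =>
      have hk := key j
      have hfac : (0 : ℝ) ≤ 1 - 1 / (s : ℝ) := by
        have : 1 / (s : ℝ) ≤ 1 := by
          rw [div_le_one hspos]; exact hsR
        linarith
      have step : M - f (S (j + 1)) ≤ (1 - 1 / (s : ℝ)) * (M - f (S j)) := by
        have hs' : (s : ℝ) ≠ 0 := ne_of_gt hspos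
        have : (M - f (S j)) / (s : ℝ) ≤ f (S (j + 1)) - f (S j) := by
          rw [div_le_iff₀ hspos]; linarith [key j]
        have hexp : (1 - 1 / (s : ℝ)) * (M - f (S j))
            = (M - f (S j)) - (M - f (S j)) / (s : ℝ) := by
          field_simp
        rw [hexp]; linarith
      calc M - f (S (j + 1)) ≤ (1 - 1 / (s : ℝ)) * (M - f (S j)) := step
        _ ≤ (1 - 1 / (s : ℝ)) * ((1 - 1 / (s : ℝ)) ^ j * M) :=
            mul_le_mul_of_nonneg_left ih hfac
        _ = (1 - 1 / (s : ℝ)) ^ (j + 1) * M := by ring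
  have := ind s
  nlinarith [this]
end

section
/- In any directed graph, the influence of a node v in the residual problem obtained by deleting all nodes reachable from a seed set S equals the marginal gain of v with respect to S in the original problem: |R(G,v) ∖ R(G,S)| computed in G equals the size of the reachability set of v in the induced subgraph on V ∖ R(G,S). -/
/-- Set of nodes reachable from a seed set `S` (reflexive reachability). -/
def reach {V : Type*} (E : V → V → Prop) (S : Set V) : Set V :=
  {u : V | ∃ s ∈ S, Relation.ReflTransGen E s u}

lemma reach_closed {V : Type*} (E : V → V → Prop) (S : Set V) {a b : V}
    (ha : a ∈ reach E S) (hab : E a b) : b ∈ reach E S := by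
  obtain ⟨s, hs, hsa⟩ := ha
  exact ⟨s, hs, hsa.tail hab⟩

lemma lift_path {V : Type*} (E : V → V → Prop) (S : Set V) {v u : V}
    (hv : v ∉ reach E S) (hu : u ∉ reach E S) (h : Relation.ReflTransGen E v u) :
    Relation.ReflTransGen (fun a b : {w : V // w ∉ reach E S} => E a.1 b.1)
      ⟨v, hv⟩ ⟨u, hu⟩ := by
  induction h with
  | refl => exact .refl
  | @tail b c hvb hbu ih =>
    have hb : b ∉ reach E S := fun hb => hu (reach_closed E S hb hbu)
    exact (ih hb).tail hbu

/-- for `v ∉ R(G,S)`, the size of the reachability set of `v` in the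
residual graph (induced subgraph on `V ∖ R(G,S)`) equals the marginal gain
`|R(G, S ∪ {v})| - |R(G,S)|` in the original graph. -/
theorem residual_influence_eq_marginal {V : Type*} [Fintype V]
    (E : V → V → Prop) (S : Set V) (v : V) (hv : v ∉ reach E S) :
    (({u : {w : V // w ∉ reach E S} |
        Relation.ReflTransGen (fun a b : {w : V // w ∉ reach E S} => E a.1 b.1)
          ⟨v, hv⟩ u}).ncard : ℤ) =
      ((reach E (S ∪ {v})).ncard : ℤ) - ((reach E S).ncard : ℤ) := by
  classical
  set A := reach E S with hA
  set B := reach E {v} with hB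
  have hBv : B = {u : V | Relation.ReflTransGen E v u} := by
    ext u; simp [hB, reach]
  have himg : Subtype.val '' ({u : {w : V // w ∉ A} |
      Relation.ReflTransGen (fun a b : {w : V // w ∉ A} => E a.1 b.1)
        ⟨v, hv⟩ u}) = B \ A := by
    ext u
    constructor
    · rintro ⟨⟨u, hu⟩, hpath, rfl⟩
      refine ⟨?_, hu⟩
      rw [hBv]
      exact hpath.lift Subtype.val (fun {a b} h => h)
    · rintro ⟨hub, hu⟩
      rw [hBv] at hub
      exact ⟨⟨u, hu⟩, lift_path E S hv hu hub, rfl⟩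
  have hcard : ({u : {w : V // w ∉ A} |
      Relation.ReflTransGen (fun a b : {w : V // w ∉ A} => E a.1 b.1)
        ⟨v, hv⟩ u}).ncard = (B \ A).ncard := by
    rw [← himg, Set.ncard_image_of_injective _ Subtype.val_injective]
  have hunion : reach E (S ∪ {v}) = A ∪ B := by
    ext u
    simp only [reach, Set.mem_union, Set.mem_setOf_eq, hA, hB]
    constructor
    · rintro ⟨s, hs | hs, hsu⟩
      · exact Or.inl ⟨s, hs, hsu⟩
      · exact Or.inr ⟨s, hs, hsu⟩
    · rintro (⟨s, hs, hsu⟩ | ⟨s, hs, hsu⟩)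
      · exact ⟨s, Or.inl hs, hsu⟩
      · exact ⟨s, Or.inr hs, hsu⟩
  have hAB : A ∪ B = A ∪ (B \ A) := (Set.union_diff_self).symm
  have hdisj : Disjoint A (B \ A) := Set.disjoint_sdiff_right
  have : (reach E (S ∪ {v})).ncard = A.ncard + (B \ A).ncard := by
    rw [hunion, hAB, Set.ncard_union_eq hdisj (Set.toFinite _) (Set.toFinite _)]
  rw [hcard, this]
  push_cast
  ring
end

section
/- Let each element of a finite set R of size n receive an independent uniform [0,1] rank. For k ≤ n, the expectation of (k−1)/τ, where τ is the k-th smallest rank, equals n; i.e., the bottom-k cardinality estimator (k−1)/τ is an unbiased estimator of |R| when |R| ≥ k. -/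
open MeasureTheory

/-- The `k`-th smallest value (k-th order statistic) of a family of reals. -/
noncomputable def kthSmallest {n : ℕ} (k : ℕ) (ω : Fin n → ℝ) : ℝ :=
  sInf {t : ℝ | k ≤ {i : Fin n | ω i ≤ t}.ncard}

/-!
For `u ∈ (0, 1]` we have `1 / u = 1 + ∫_u^1 s⁻² ds`, so by Tonelli
`E[1/τ] = 1 + ∫_0^1 s⁻² P(τ ≤ s) ds`. The event `τ ≤ s` says that at least `k` of the `n`
ranks are `≤ s`, so `P(τ ≤ s) = ∑_{j ≥ k} C(n, j) s^j (1 - s)^(n - j)`. Against `s⁻²` the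
`j`-th term integrates to the Beta value `C(n, j) (j-2)! (n-j)! / (n-1)! = n/(j-1) - n/j`, and
the sum over `k ≤ j ≤ n` telescopes to `n/(k-1) - 1`.
-/

open Set
open scoped Finset Nat

lemma setOf_le_card_filter_eq_iUnion {ι α : Type*} [Fintype ι] (p : ι → α → Prop)
    [∀ i x, Decidable (p i x)] (k : ℕ) :
    {x | k ≤ #{i | p i x}} = ⋃ A ∈ Finset.powersetCard k Finset.univ, ⋂ i ∈ A, {x | p i x} := by
  ext x
  simp [Finset.le_card_iff_exists_subset_card, Finset.subset_iff, and_comm]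

section OrderStatistic

variable {n k : ℕ} (ω : Fin n → ℝ)

lemma isClosed_setOf_le_card_filter_le : IsClosed {t : ℝ | k ≤ #{i | ω i ≤ t}} := by
  rw [setOf_le_card_filter_eq_iUnion (fun i t => ω i ≤ t)]
  exact isClosed_biUnion_finset fun A _ => isClosed_biInter fun i _ => isClosed_Ici

lemma kthSmallest_eq_sInf : kthSmallest k ω = sInf {t : ℝ | k ≤ #{i | ω i ≤ t}} := by
  simp only [kthSmallest, ncard_eq_toFinset_card', toFinset_ofPred]

lemma kthSmallest_le_iff (hk : 1 ≤ k) (hkn : k ≤ n) {t : ℝ} :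
    kthSmallest k ω ≤ t ↔ k ≤ #{i | ω i ≤ t} := by
  have hmono : Monotone fun t : ℝ => #{i | ω i ≤ t} := fun s t hst =>
    Finset.card_le_card (Finset.monotone_filter_right _ fun i _ h => h.trans hst)
  obtain ⟨M, hM⟩ := (finite_range ω).bddAbove
  obtain ⟨m, hm⟩ := (finite_range ω).bddBelow
  have hne : {t : ℝ | k ≤ #{i | ω i ≤ t}}.Nonempty :=
    ⟨M, by simpa [Finset.filter_true_of_mem fun i _ => hM (mem_range_self i)] using hkn⟩
  have hbdd : BddBelow {t : ℝ | k ≤ #{i | ω i ≤ t}} := by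
    refine ⟨m, fun t ht => ?_⟩
    obtain ⟨i, hi⟩ := Finset.card_pos.mp (hk.trans ht)
    exact (hm (mem_range_self i)).trans (Finset.mem_filter.mp hi).2
  rw [kthSmallest_eq_sInf]
  refine ⟨fun h => ?_, fun h => csInf_le hbdd h⟩
  exact ((isClosed_setOf_le_card_filter_le ω).csInf_mem hne hbdd).trans (hmono h)

lemma kthSmallest_mem_Ioc (hk : 1 ≤ k) (hkn : k ≤ n) (hω : ∀ i, ω i ∈ Ioc 0 1) :
    kthSmallest k ω ∈ Ioc 0 1 := by
  refine ⟨lt_of_not_ge fun h => ?_, ?_⟩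
  · rw [kthSmallest_le_iff ω hk hkn,
      Finset.filter_false_of_mem fun i _ => not_le.2 (hω i).1, Finset.card_empty] at h
    omega
  · rw [kthSmallest_le_iff ω hk hkn, Finset.filter_true_of_mem fun i _ => (hω i).2]
    simpa using hkn

variable (k) in
lemma measurable_kthSmallest (hk : 1 ≤ k) (hkn : k ≤ n) :
    Measurable (kthSmallest k : (Fin n → ℝ) → ℝ) := by
  refine measurable_of_Iic fun t => ?_
  have : kthSmallest k ⁻¹' Iic t = {ω : Fin n → ℝ | k ≤ #{i | ω i ≤ t}} :=
    ext fun ω => kthSmallest_le_iff ω hk hkn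
  rw [this, setOf_le_card_filter_eq_iUnion (fun i (ω : Fin n → ℝ) => ω i ≤ t)]
  exact Finset.measurableSet_biUnion _ fun A _ => Finset.measurableSet_biInter _ fun i _ =>
    measurableSet_le (measurable_pi_apply i) measurable_const

end OrderStatistic

section Binomial

variable {ι α : Type*} [Fintype ι] [DecidableEq ι] {B : Set α} [DecidablePred (· ∈ B)]

lemma setOf_filter_mem_eq_pi (A : Finset ι) :
    {ω : ι → α | ({i | ω i ∈ B} : Finset ι) = A} = univ.pi fun i => if i ∈ A then B else Bᶜ := by
  ext ω
  simp only [mem_ofPred_eq, Finset.ext_iff, Finset.mem_filter, Finset.mem_univ, true_and,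
    mem_pi, mem_univ, forall_const]
  refine forall_congr' fun i => ?_
  split_ifs with hi <;> simp [hi]

variable [MeasurableSpace α] (μ : Measure α) [SigmaFinite μ]

lemma measure_pi_filter_mem_eq (A : Finset ι) :
    Measure.pi (fun _ : ι => μ) {ω | ({i | ω i ∈ B} : Finset ι) = A} =
      μ B ^ #A * μ Bᶜ ^ (Fintype.card ι - #A) := by
  rw [setOf_filter_mem_eq_pi, Measure.pi_pi]
  simp only [apply_ite μ]
  rw [Finset.prod_ite, Finset.prod_const, Finset.prod_const, Finset.filter_mem_eq_inter,
    Finset.univ_inter, Finset.filter_not, Finset.filter_mem_eq_inter, Finset.univ_inter,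
    Finset.card_univ_sdiff]

lemma measure_pi_le_card_filter_mem (hB : MeasurableSet B) (k : ℕ) :
    Measure.pi (fun _ : ι => μ) {ω | k ≤ #{i | ω i ∈ B}} =
      ∑ j ∈ Finset.Icc k (Fintype.card ι),
        (Fintype.card ι).choose j * (μ B ^ j * μ Bᶜ ^ (Fintype.card ι - j)) := by
  have hfib : ∀ A : Finset ι, MeasurableSet {ω : ι → α | ({i | ω i ∈ B} : Finset ι) = A} :=
    fun A => by
      rw [setOf_filter_mem_eq_pi]
      exact MeasurableSet.univ_pi fun i => by split_ifs; exacts [hB, hB.compl]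
  have hsum := sum_measure_preimage_singleton (μ := Measure.pi fun _ : ι => μ)
    ({A | k ≤ #A} : Finset (Finset ι)) (f := fun ω : ι → α => ({i | ω i ∈ B} : Finset ι))
    fun A _ => hfib A
  have hset : {ω : ι → α | k ≤ #{i | ω i ∈ B}} =
      (fun ω : ι → α => ({i | ω i ∈ B} : Finset ι)) ⁻¹' ↑({A | k ≤ #A} : Finset (Finset ι)) := by
    ext; simp
  rw [hset, ← hsum]
  simp only [preimage, mem_singleton_iff, measure_pi_filter_mem_eq]
  rw [Finset.sum_filter, ← Finset.powerset_univ, Finset.sum_powerset_apply_card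
    (f := fun j => if k ≤ j then μ B ^ j * μ Bᶜ ^ (Fintype.card ι - j) else 0), Finset.card_univ]
  simp only [nsmul_eq_mul, mul_ite, mul_zero]
  rw [← Finset.sum_filter]
  congr 1
  ext j
  simp only [Finset.mem_filter, Finset.mem_range, Finset.mem_Icc]
  omega

end Binomial

instance : IsProbabilityMeasure (volume.restrict (Icc (0 : ℝ) 1)) := ⟨by simp⟩

lemma volume_restrict_Icc_Iic {s : ℝ} (hs : s ∈ Icc 0 1) :
    volume.restrict (Icc (0 : ℝ) 1) (Iic s) = ENNReal.ofReal s := by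
  rw [Measure.restrict_apply measurableSet_Iic, show Iic s ∩ Icc 0 1 = Icc 0 s by
    ext x; simp only [mem_inter_iff, mem_Iic, mem_Icc]; grind, Real.volume_Icc, sub_zero]

lemma volume_restrict_Icc_compl_Iic {s : ℝ} (hs : s ∈ Icc 0 1) :
    volume.restrict (Icc (0 : ℝ) 1) (Iic s)ᶜ = ENNReal.ofReal (1 - s) := by
  rw [prob_compl_eq_one_sub measurableSet_Iic, volume_restrict_Icc_Iic hs,
    ENNReal.ofReal_sub _ hs.1, ENNReal.ofReal_one]

lemma ae_forall_mem_Ioc {ι : Type*} [Fintype ι] :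
    ∀ᵐ ω ∂Measure.pi (fun _ : ι => volume.restrict (Icc (0 : ℝ) 1)), ∀ i, ω i ∈ Ioc 0 1 := by
  have h : ∀ᵐ x ∂volume.restrict (Icc (0 : ℝ) 1), x ∈ Ioc 0 1 := by
    rw [Measure.restrict_congr_set Ioc_ae_eq_Icc.symm]
    exact ae_restrict_mem measurableSet_Ioc
  exact ae_all_iff.2 fun i => Measure.tendsto_eval_ae_ae.eventually h

noncomputable def binomialTail (n k : ℕ) (s : ℝ) : ℝ :=
  ∑ j ∈ Finset.Icc k n, n.choose j * (s ^ j * (1 - s) ^ (n - j))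

lemma binomialTail_term_nonneg {n j : ℕ} {s : ℝ} (hs : s ∈ Icc 0 1) :
    0 ≤ (n.choose j : ℝ) * (s ^ j * (1 - s) ^ (n - j)) :=
  mul_nonneg (n.choose j).cast_nonneg
    (mul_nonneg (pow_nonneg hs.1 _) (pow_nonneg (sub_nonneg.2 hs.2) _))

lemma measure_pi_kthSmallest_le {n k : ℕ} (hk : 1 ≤ k) (hkn : k ≤ n) {s : ℝ}
    (hs : s ∈ Icc 0 1) :
    Measure.pi (fun _ : Fin n => volume.restrict (Icc (0 : ℝ) 1)) {ω | kthSmallest k ω ≤ s} =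
      ENNReal.ofReal (binomialTail n k s) := by
  have hset : {ω | kthSmallest k ω ≤ s} = {ω : Fin n → ℝ | k ≤ #{i | ω i ∈ Iic s}} := by
    ext ω; simp [kthSmallest_le_iff ω hk hkn]
  have h1s : 0 ≤ 1 - s := sub_nonneg.2 hs.2
  rw [hset, measure_pi_le_card_filter_mem _ (B := Iic s) measurableSet_Iic k,
    volume_restrict_Icc_Iic hs, volume_restrict_Icc_compl_Iic hs, Fintype.card_fin, binomialTail,
    ENNReal.ofReal_sum_of_nonneg fun j _ => binomialTail_term_nonneg hs]
  refine Finset.sum_congr rfl fun j _ => ?_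
  rw [ENNReal.ofReal_mul (n.choose j).cast_nonneg, ENNReal.ofReal_mul (pow_nonneg hs.1 _),
    ENNReal.ofReal_pow hs.1, ENNReal.ofReal_pow h1s, ENNReal.ofReal_natCast]

lemma integral_inv_sq {u v : ℝ} (hu : 0 < u) (huv : u ≤ v) :
    ∫ s in u..v, (s ^ 2)⁻¹ = u⁻¹ - v⁻¹ := by
  have hpos : ∀ x ∈ uIcc u v, x ≠ 0 := fun x hx =>
    ((hu.trans_le (uIcc_of_le huv ▸ hx).1)).ne'
  have hcont : ContinuousOn (fun s : ℝ => (s ^ 2)⁻¹) (uIcc u v) :=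
    (continuousOn_pow 2).inv₀ fun x hx => pow_ne_zero 2 (hpos x hx)
  rw [intervalIntegral.integral_eq_sub_of_hasDerivAt (f := fun s => -s⁻¹)
    (fun x hx => by simpa using (hasDerivAt_inv (hpos x hx)).fun_neg) hcont.intervalIntegrable]
  ring

lemma lintegral_Ioo_indicator_Ici_inv_sq {u : ℝ} (hu : u ∈ Ioc 0 1) :
    ∫⁻ s in Ioo 0 1, (Ici u).indicator (fun s => ENNReal.ofReal (s ^ 2)⁻¹) s =
      ENNReal.ofReal (u⁻¹ - 1) := by
  have hset : Ici u ∩ Ioo 0 1 = Ico u 1 := by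
    ext s; simp only [mem_inter_iff, mem_Ici, mem_Ioo, mem_Ico]
    constructor
    · rintro ⟨h1, -, h2⟩; exact ⟨h1, h2⟩
    · rintro ⟨h1, h2⟩; exact ⟨h1, hu.1.trans_le h1, h2⟩
  rw [lintegral_indicator measurableSet_Ici, Measure.restrict_restrict measurableSet_Ici, hset,
    ← ofReal_integral_eq_lintegral_ofReal, integral_Ico_eq_integral_Ioo,
    ← integral_Ioc_eq_integral_Ioo, ← intervalIntegral.integral_of_le hu.2,
    integral_inv_sq hu.1 hu.2, inv_one]
  · exact ((continuousOn_pow 2).inv₀ fun x hx => pow_ne_zero 2 (hu.1.trans_le hx.1).ne')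
      |>.integrableOn_Icc.mono_set Ico_subset_Icc_self
  · exact ae_of_all _ fun s => by positivity

lemma ofReal_inv_eq_one_add_lintegral {u : ℝ} (hu : u ∈ Ioc 0 1) :
    ENNReal.ofReal u⁻¹ =
      1 + ∫⁻ s in Ioo 0 1, (Ici u).indicator (fun s => ENNReal.ofReal (s ^ 2)⁻¹) s := by
  rw [lintegral_Ioo_indicator_Ici_inv_sq hu, ← ENNReal.ofReal_one,
    ← ENNReal.ofReal_add zero_le_one (sub_nonneg.2 (one_le_inv₀ hu.1 |>.2 hu.2)), add_sub_cancel]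

theorem lintegral_ofReal_inv_eq_one_add {Ω : Type*} [MeasurableSpace Ω] {μ : Measure Ω}
    [IsProbabilityMeasure μ] {X : Ω → ℝ} (hX : Measurable X) (hX01 : ∀ᵐ ω ∂μ, X ω ∈ Ioc 0 1) :
    ∫⁻ ω, ENNReal.ofReal (X ω)⁻¹ ∂μ =
      1 + ∫⁻ s in Ioo 0 1, ENNReal.ofReal (s ^ 2)⁻¹ * μ {ω | X ω ≤ s} := by
  have hmeas : Measurable (Function.uncurry fun ω s =>
      (Ici (X ω)).indicator (fun s : ℝ => ENNReal.ofReal (s ^ 2)⁻¹) s) := by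
    have : (Function.uncurry fun ω s =>
        (Ici (X ω)).indicator (fun s : ℝ => ENNReal.ofReal (s ^ 2)⁻¹) s) =
        {p : Ω × ℝ | X p.1 ≤ p.2}.indicator fun p => ENNReal.ofReal (p.2 ^ 2)⁻¹ := by
      ext p; simp [indicator_apply, Function.uncurry]
    rw [this]
    exact (by fun_prop : Measurable fun p : Ω × ℝ => ENNReal.ofReal (p.2 ^ 2)⁻¹).indicator
      (measurableSet_le (hX.comp measurable_fst) measurable_snd)
  calc ∫⁻ ω, ENNReal.ofReal (X ω)⁻¹ ∂μ
      = ∫⁻ ω, (1 + ∫⁻ s in Ioo 0 1,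
          (Ici (X ω)).indicator (fun s => ENNReal.ofReal (s ^ 2)⁻¹) s) ∂μ :=
        lintegral_congr_ae (hX01.mono fun ω hω => ofReal_inv_eq_one_add_lintegral hω)
    _ = 1 + ∫⁻ s in Ioo 0 1, ∫⁻ ω,
          (Ici (X ω)).indicator (fun s => ENNReal.ofReal (s ^ 2)⁻¹) s ∂μ := by
        rw [lintegral_add_left measurable_const, lintegral_const, measure_univ, mul_one,
          lintegral_lintegral_swap hmeas.aemeasurable]
    _ = 1 + ∫⁻ s in Ioo 0 1, ENNReal.ofReal (s ^ 2)⁻¹ * μ {ω | X ω ≤ s} := by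
        congr 1
        refine lintegral_congr fun s => ?_
        rw [← lintegral_indicator_const (measurableSet_le hX measurable_const)]
        simp [indicator_apply]

lemma integral_pow_mul_one_sub_pow_succ (a b : ℕ) :
    (a + 1) * ∫ s in (0 : ℝ)..1, s ^ a * (1 - s) ^ (b + 1) =
      (b + 1) * ∫ s in (0 : ℝ)..1, s ^ (a + 1) * (1 - s) ^ b := by
  have hderiv : ∀ x : ℝ, HasDerivAt (fun s => s ^ (a + 1) * (1 - s) ^ (b + 1))
      ((a + 1) * (x ^ a * (1 - x) ^ (b + 1)) - (b + 1) * (x ^ (a + 1) * (1 - x) ^ b)) x := by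
    intro x
    refine ((hasDerivAt_pow (a + 1) x).fun_mul
      (((hasDerivAt_id' x).const_sub 1).fun_pow (b + 1))).congr_deriv ?_
    simp only [Nat.cast_add, Nat.cast_one, add_tsub_cancel_right]
    ring
  have hFTC := intervalIntegral.integral_eq_sub_of_hasDerivAt (a := 0) (b := 1)
    (fun x _ => hderiv x) (by apply Continuous.intervalIntegrable; fun_prop)
  rw [intervalIntegral.integral_sub (by apply Continuous.intervalIntegrable; fun_prop)
      (by apply Continuous.intervalIntegrable; fun_prop),
    intervalIntegral.integral_const_mul, intervalIntegral.integral_const_mul] at hFTC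
  rw [sub_self, zero_pow b.succ_ne_zero, zero_pow a.succ_ne_zero, mul_zero, zero_mul,
    sub_zero] at hFTC
  exact sub_eq_zero.1 hFTC

lemma integral_pow_mul_one_sub_pow (a b : ℕ) :
    ∫ s in (0 : ℝ)..1, s ^ a * (1 - s) ^ b = a ! * b ! / (a + b + 1)! := by
  induction b generalizing a with
  | zero =>
    simp only [pow_zero, mul_one, integral_pow, one_pow, zero_pow a.succ_ne_zero, sub_zero,
      Nat.factorial_zero, Nat.cast_one, add_zero, Nat.factorial_succ, Nat.cast_mul, Nat.cast_add]
    field_simp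
  | succ b ih =>
    refine mul_left_cancel₀ (by positivity : (a : ℝ) + 1 ≠ 0) ?_
    rw [integral_pow_mul_one_sub_pow_succ, ih, show a + 1 + b + 1 = a + (b + 1) + 1 by omega,
      Nat.factorial_succ a, Nat.factorial_succ b]
    push_cast
    ring

lemma choose_mul_integral_pow_mul_one_sub_pow {n j : ℕ} (hj : 2 ≤ j) (hjn : j ≤ n) :
    n.choose j * ∫ s in (0 : ℝ)..1, s ^ (j - 2) * (1 - s) ^ (n - j) =
      n / ((j : ℝ) - 1) - n / j := by
  obtain ⟨m, rfl⟩ := Nat.exists_eq_add_of_le' hj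
  obtain ⟨p, rfl⟩ := Nat.exists_eq_add_of_le hjn
  rw [integral_pow_mul_one_sub_pow, Nat.cast_choose ℝ hjn,
    show m + 2 - 2 + (m + 2 + p - (m + 2)) + 1 = m + p + 1 by omega,
    show m + 2 + p - (m + 2) = p by omega, show m + 2 - 2 = m by omega,
    show m + 2 + p = (m + p + 1) + 1 by omega]
  simp only [Nat.factorial_succ]
  push_cast
  rw [show (m : ℝ) + 2 - 1 = m + 1 by ring]
  field_simp
  ring

lemma sum_Icc_div_sub_one_sub_div {n k : ℕ} (hk : 2 ≤ k) (hkn : k ≤ n) :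
    ∑ j ∈ Finset.Icc k n, ((n : ℝ) / ((j : ℝ) - 1) - n / j) = n / ((k : ℝ) - 1) - 1 := by
  have hn : (n : ℝ) ≠ 0 := by norm_cast; omega
  rw [← Finset.Ico_add_one_right_eq_Icc]
  convert Finset.sum_Ico_sub (fun j : ℕ => -(n : ℝ) / ((j : ℝ) - 1)) (by omega : k ≤ n + 1)
    using 1
  · refine Finset.sum_congr rfl fun j _ => ?_
    push_cast
    ring
  · push_cast
    rw [add_sub_cancel_right, neg_div_self hn]
    ring

lemma inv_sq_mul_binomialTail {n k : ℕ} (hk : 2 ≤ k) {s : ℝ} (hs : s ≠ 0) :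
    (s ^ 2)⁻¹ * binomialTail n k s =
      ∑ j ∈ Finset.Icc k n, n.choose j * (s ^ (j - 2) * (1 - s) ^ (n - j)) := by
  rw [binomialTail, Finset.mul_sum]
  refine Finset.sum_congr rfl fun j hj => ?_
  rw [← Nat.sub_add_cancel (hk.trans (Finset.mem_Icc.1 hj).1), pow_add, Nat.add_sub_cancel]
  field_simp

lemma integrableOn_inv_sq_mul_binomialTail {n k : ℕ} (hk : 2 ≤ k) :
    IntegrableOn (fun s => (s ^ 2)⁻¹ * binomialTail n k s) (Ioo 0 1) := by
  refine IntegrableOn.congr_fun ?_ (fun s hs => (inv_sq_mul_binomialTail hk hs.1.ne').symm)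
    measurableSet_Ioo
  exact (Continuous.integrableOn_Icc (by fun_prop)).mono_set Ioo_subset_Icc_self

lemma integral_inv_sq_mul_binomialTail {n k : ℕ} (hk : 2 ≤ k) (hkn : k ≤ n) :
    ∫ s in Ioo 0 1, (s ^ 2)⁻¹ * binomialTail n k s = n / ((k : ℝ) - 1) - 1 := by
  rw [setIntegral_congr_fun measurableSet_Ioo fun s hs => inv_sq_mul_binomialTail hk hs.1.ne',
    ← integral_Ioc_eq_integral_Ioo, ← intervalIntegral.integral_of_le zero_le_one,
    intervalIntegral.integral_finsetSum fun j _ => by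
      apply Continuous.intervalIntegrable; fun_prop]
  simp_rw [intervalIntegral.integral_const_mul]
  rw [← sum_Icc_div_sub_one_sub_div hk hkn]
  refine Finset.sum_congr rfl fun j hj => ?_
  rw [Finset.mem_Icc] at hj
  exact choose_mul_integral_pow_mul_one_sub_pow (hk.trans hj.1) hj.2

lemma ae_kthSmallest_mem_Ioc {n k : ℕ} (hk : 1 ≤ k) (hkn : k ≤ n) :
    ∀ᵐ ω ∂Measure.pi (fun _ : Fin n => volume.restrict (Icc (0 : ℝ) 1)),
      kthSmallest k ω ∈ Ioc 0 1 :=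
  ae_forall_mem_Ioc.mono fun ω hω => kthSmallest_mem_Ioc ω hk hkn hω

lemma lintegral_ofReal_inv_kthSmallest {n k : ℕ} (hk : 2 ≤ k) (hkn : k ≤ n) :
    ∫⁻ ω, ENNReal.ofReal (kthSmallest k ω)⁻¹
        ∂Measure.pi (fun _ : Fin n => volume.restrict (Icc (0 : ℝ) 1)) =
      ENNReal.ofReal (n / ((k : ℝ) - 1)) := by
  have hk1 : 1 ≤ k := by omega
  have hn : (1 : ℝ) ≤ n / ((k : ℝ) - 1) := by
    have : (2 : ℝ) ≤ k := by exact_mod_cast hk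
    have : (k : ℝ) ≤ n := by exact_mod_cast hkn
    rw [one_le_div (by linarith)]
    linarith
  rw [lintegral_ofReal_inv_eq_one_add (measurable_kthSmallest k hk1 hkn)
    (ae_kthSmallest_mem_Ioc hk1 hkn), ← add_sub_cancel 1 (n / ((k : ℝ) - 1)),
    ENNReal.ofReal_add zero_le_one (by linarith), ENNReal.ofReal_one,
    ← integral_inv_sq_mul_binomialTail hk hkn, ofReal_integral_eq_lintegral_ofReal
      (integrableOn_inv_sq_mul_binomialTail hk)]
  · refine congrArg _ (setLIntegral_congr_fun measurableSet_Ioo fun s hs => ?_)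
    rw [measure_pi_kthSmallest_le hk1 hkn (Ioo_subset_Icc_self hs),
      ENNReal.ofReal_mul (by positivity)]
  · exact ae_restrict_of_forall_mem measurableSet_Ioo fun s hs => mul_nonneg (by positivity)
      (Finset.sum_nonneg fun j _ => binomialTail_term_nonneg (Ioo_subset_Icc_self hs))

/-- with i.i.d. uniform `[0,1]` ranks on `n` elements and `2 ≤ k ≤ n`,
the bottom-`k` estimator `(k−1)/τ` (with `τ` the `k`-th smallest rank) is an unbiased
estimator of the cardinality `n`. -/
theorem bottom_k_estimator_unbiased (n k : ℕ) (hk : 2 ≤ k) (hkn : k ≤ n) :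
    ∫ ω : Fin n → ℝ, ((k : ℝ) - 1) / kthSmallest k ω
        ∂(Measure.pi fun _ : Fin n => volume.restrict (Set.Icc (0 : ℝ) 1)) =
      (n : ℝ) := by
  have hk1 : 1 ≤ k := by omega
  have hk' : (0 : ℝ) < k - 1 := by
    rw [sub_pos]
    exact_mod_cast hk
  calc ∫ ω, ((k : ℝ) - 1) / kthSmallest k ω ∂_
      = ((k : ℝ) - 1) * ∫ ω, (kthSmallest k ω)⁻¹
          ∂Measure.pi (fun _ : Fin n => volume.restrict (Icc (0 : ℝ) 1)) := by
        simp_rw [div_eq_mul_inv]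
        exact integral_const_mul _ _
    _ = ((k : ℝ) - 1) * (n / ((k : ℝ) - 1)) := by
        rw [integral_eq_lintegral_of_nonneg_ae
          ((ae_kthSmallest_mem_Ioc hk1 hkn).mono fun ω hω => inv_nonneg.2 hω.1.le)
          (measurable_kthSmallest k hk1 hkn).inv.aestronglyMeasurable,
          lintegral_ofReal_inv_kthSmallest hk hkn, ENNReal.toReal_ofReal (div_nonneg n.cast_nonneg hk'.le)]
    _ = n := mul_div_cancel₀ _ hk'.ne'
end

section
/- In the binary IC model, if each edge e is independently live with probability p_e, then the influence INF(𝒢,S) = E_{G∼𝒢}|⋃_{u∈S} R(G,u)| is a monotone submodular function of the seed set S, as an expectation (convex combination) of monotone submodular coverage functions. -/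
/-- Influence of a seed set in a fixed instance `g` (edges present when `g u v = true`). -/
noncomputable def instInfluence {V : Type*} (g : V → V → Bool) (S : Set V) : ℕ :=
  {u : V | ∃ s ∈ S, Relation.ReflTransGen (fun a b => g a b = true) s u}.ncard

/-- Probability of the instance `g` in the binary IC model with edge probabilities `p`:
each directed edge `(u,v)` is live independently with probability `p u v`. -/
noncomputable def instWeight {V : Type*} [Fintype V] (p : V → V → ℝ)
    (g : V → V → Bool) : ℝ :=
  ∏ u : V, ∏ v : V, (if g u v then p u v else 1 - p u v)

/-- Expected influence in the binary IC model. -/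
noncomputable def icInfluence {V : Type*} [Fintype V] [DecidableEq V]
    (p : V → V → ℝ) (S : Set V) : ℝ :=
  ∑ g : V → V → Bool, instWeight p g * (instInfluence g S : ℝ)


def reachSet {V : Type*} (g : V → V → Bool) (X : Set V) : Set V :=
  {u : V | ∃ s ∈ X, Relation.ReflTransGen (fun a b => g a b = true) s u}

lemma instInfluence_eq {V : Type*} (g : V → V → Bool) (S : Set V) :
    instInfluence g S = (reachSet g S).ncard := rfl

lemma reachSet_union {V : Type*} (g : V → V → Bool) (S T : Set V) :
    reachSet g (S ∪ T) = reachSet g S ∪ reachSet g T := by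
  ext u
  constructor
  · rintro ⟨s, hs | hs, h⟩
    · exact Or.inl ⟨s, hs, h⟩
    · exact Or.inr ⟨s, hs, h⟩
  · rintro (⟨s, hs, h⟩ | ⟨s, hs, h⟩)
    · exact ⟨s, Or.inl hs, h⟩
    · exact ⟨s, Or.inr hs, h⟩

lemma reachSet_mono {V : Type*} (g : V → V → Bool) {S T : Set V} (h : S ⊆ T) :
    reachSet g S ⊆ reachSet g T := fun _ ⟨s, hs, hr⟩ => ⟨s, h hs, hr⟩

lemma instInfluence_union_singleton {V : Type*} [Fintype V] (g : V → V → Bool)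
    (S : Set V) (v : V) :
    instInfluence g (S ∪ {v}) =
      instInfluence g S + (reachSet g {v} \ reachSet g S).ncard := by
  rw [instInfluence_eq, instInfluence_eq, reachSet_union]
  have : reachSet g S ∪ reachSet g {v} = reachSet g S ∪ (reachSet g {v} \ reachSet g S) := by
    rw [Set.union_diff_self]
  rw [this, Set.ncard_union_eq (Set.disjoint_sdiff_right) (Set.toFinite _) (Set.toFinite _)]

lemma instWeight_nonneg {V : Type*} [Fintype V] {p : V → V → ℝ}
    (hp : ∀ u v, 0 ≤ p u v ∧ p u v ≤ 1) (g : V → V → Bool) : 0 ≤ instWeight p g := by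
  apply Finset.prod_nonneg; intro u _
  apply Finset.prod_nonneg; intro v _
  by_cases h : g u v <;> simp [h, (hp u v).1, sub_nonneg.mpr (hp u v).2]

/-- in the binary IC model, the influence `S ↦ INF(𝒢,S)` is a monotone
submodular function of the seed set. -/
theorem icInfluence_monotone_submodular {V : Type*} [Fintype V] [DecidableEq V]
    (p : V → V → ℝ) (hp : ∀ u v, 0 ≤ p u v ∧ p u v ≤ 1) :
    (∀ S T : Set V, S ⊆ T → icInfluence p S ≤ icInfluence p T) ∧
    (∀ S T : Set V, S ⊆ T → ∀ v : V,
      icInfluence p (S ∪ {v}) - icInfluence p S ≥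
        icInfluence p (T ∪ {v}) - icInfluence p T) := by
  constructor
  · intro S T hST
    apply Finset.sum_le_sum
    intro g _
    apply mul_le_mul_of_nonneg_left _ (instWeight_nonneg hp g)
    exact_mod_cast Set.ncard_le_ncard (reachSet_mono g hST) (Set.toFinite _)
  · intro S T hST v
    have key : ∀ (X : Set V), icInfluence p (X ∪ {v}) - icInfluence p X =
        ∑ g : V → V → Bool,
          instWeight p g * ((reachSet g {v} \ reachSet g X).ncard : ℝ) := by
      intro X
      rw [icInfluence, icInfluence, ← Finset.sum_sub_distrib]
      apply Finset.sum_congr rfl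
      intro g _
      rw [← mul_sub]
      congr 1
      rw [instInfluence_union_singleton]
      push_cast
      ring
    rw [ge_iff_le, key S, key T]
    apply Finset.sum_le_sum
    intro g _
    apply mul_le_mul_of_nonneg_left _ (instWeight_nonneg hp g)
    exact_mod_cast Set.ncard_le_ncard
      (Set.diff_subset_diff_right (reachSet_mono g hST)) (Set.toFinite _)
end
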